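/- Let a > 0, let ψ(x) = (1/(2πa))·exp(−x²/(4πa²)), let C(m) = ∫_m^∞ (x − m)·ψ(x) dx, and define Ĉ(m) = a − m/2 + m²/(4πa). Then C(m) − Ĉ(m) = O(m⁴) as m → 0; that is, there exist constants δ > 0 and M ≥ 0 such that |C(m) − Ĉ(m)| ≤ M·m⁴ for all |m| ≤ δ. -/

import Mathlib

open MeasureTheory

/-- Bachelier's Gaussian density `ψ(x) = (1/(2πa))·exp(−x²/(4πa²))`. -/
noncomputable def bachelierPsi (a x : ℝ) : ℝ :=
  (2 * Real.pi * a)⁻¹ * Real.exp (-x ^ 2 / (4 * Real.pi * a ^ 2))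

/-- Bachelier call price as a function of `m = K − S₀`. -/
noncomputable def bachelierCall (a m : ℝ) : ℝ :=
  ∫ x in Set.Ioi m, (x - m) * bachelierPsi a x

/-!
With `b = 1/(4πa²)` the density is `ψ(x) = (2πa)⁻¹ e^{-bx²}`, and the call price is
`(2πa)⁻¹ (e^{-bm²}/(2b) − m ∫_m^∞ e^{-bx²} dx)`, where
`∫_m^∞ e^{-bx²} dx = √(π/b)/2 − ∫_0^m e^{-bx²} dx`. Up to that factor `(2πa)⁻¹`, subtracting
the quadratic approximation leaves
`(e^{-bm²} − 1 + bm²)/(2b) + m ∫_0^m (e^{-bx²} − 1) dx`, and both terms are `O(b m⁴)`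
because `e^{-u} = 1 − u + O(u²)`.
-/

open Real Set Filter Topology
open scoped Interval

section Gaussian

variable {b : ℝ}

theorem integral_Ioi_mul_exp_neg_mul_sq (hb : 0 < b) (m : ℝ) :
    ∫ x in Ioi m, x * exp (-b * x ^ 2) = exp (-b * m ^ 2) / (2 * b) := by
  have hderiv : ∀ x ∈ Ici m,
      HasDerivAt (fun x => -(2 * b)⁻¹ * exp (-b * x ^ 2)) (x * exp (-b * x ^ 2)) x := by
    intro x _
    refine (((hasDerivAt_pow 2 x).const_mul (-b)).exp.const_mul (-(2 * b)⁻¹)).congr_deriv ?_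
    field_simp
    ring
  have hlim : Tendsto (fun x => -(2 * b)⁻¹ * exp (-b * x ^ 2)) atTop (𝓝 0) := by
    have hexponent : Tendsto (fun x : ℝ => -b * x ^ 2) atTop atBot :=
      (tendsto_pow_atTop two_ne_zero).const_mul_atTop_of_neg (neg_neg_of_pos hb)
    simpa using (tendsto_exp_atBot.comp hexponent).const_mul (-(2 * b)⁻¹)
  rw [integral_Ioi_of_hasDerivAt_of_tendsto' hderiv
    (integrable_mul_exp_neg_mul_sq hb).integrableOn hlim]
  ring

theorem integral_Ioi_exp_neg_mul_sq (hb : 0 < b) (m : ℝ) :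
    ∫ x in Ioi m, exp (-b * x ^ 2) = √(π / b) / 2 - ∫ x in 0..m, exp (-b * x ^ 2) := by
  have hint : ∀ c : ℝ, IntegrableOn (fun x => exp (-b * x ^ 2)) (Ioi c) :=
    fun _ => (integrable_exp_neg_mul_sq hb).integrableOn
  rw [← integral_gaussian_Ioi, ← intervalIntegral.integral_Ioi_sub_Ioi' (hint 0) (hint m),
    sub_sub_cancel]

theorem abs_integral_exp_neg_mul_sq_sub_one_le (hb : 0 ≤ b) (m : ℝ) :
    |∫ x in 0..m, (exp (-b * x ^ 2) - 1)| ≤ b * |m| ^ 3 := by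
  have hbound : ∀ x ∈ Ι 0 m, ‖exp (-b * x ^ 2) - 1‖ ≤ b * m ^ 2 := by
    intro x hx
    have hx2 : x ^ 2 ≤ m ^ 2 := by
      rcases mem_uIoc.mp hx with ⟨h0, hm⟩ | ⟨hm, h0⟩ <;> nlinarith
    have hle : exp (-b * x ^ 2) ≤ 1 := exp_le_one_iff.2 (by nlinarith)
    rw [Real.norm_eq_abs, abs_of_nonpos (sub_nonpos.2 hle)]
    nlinarith [add_one_le_exp (-b * x ^ 2)]
  have := intervalIntegral.norm_integral_le_of_norm_le_const hbound
  rw [Real.norm_eq_abs, sub_zero, ← sq_abs m] at this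
  linarith

theorem abs_integral_Ioi_sub_mul_exp_neg_mul_sq_sub_le (hb : 0 < b) {m : ℝ}
    (hm : b * m ^ 2 ≤ 1) :
    |(∫ x in Ioi m, (x - m) * exp (-b * x ^ 2)) - (1 / (2 * b) - m * √(π / b) / 2 + m ^ 2 / 2)|
      ≤ 3 * b / 2 * m ^ 4 := by
  have hclosed : ∫ x in Ioi m, (x - m) * exp (-b * x ^ 2)
      = exp (-b * m ^ 2) / (2 * b) - m * (√(π / b) / 2 - ∫ x in 0..m, exp (-b * x ^ 2)) := by
    simp_rw [sub_mul]
    rw [integral_sub (integrable_mul_exp_neg_mul_sq hb).integrableOn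
      ((integrable_exp_neg_mul_sq hb).const_mul m).integrableOn, integral_const_mul,
      integral_Ioi_mul_exp_neg_mul_sq hb, integral_Ioi_exp_neg_mul_sq hb]
  have hcentered : ∫ x in 0..m, exp (-b * x ^ 2) = (∫ x in 0..m, (exp (-b * x ^ 2) - 1)) + m := by
    rw [intervalIntegral.integral_sub (integrable_exp_neg_mul_sq hb).intervalIntegrable
      intervalIntegrable_const]
    simp
  have hexp : |exp (-b * m ^ 2) - 1 + b * m ^ 2| ≤ (b * m ^ 2) ^ 2 := by
    have hu : |-b * m ^ 2| ≤ 1 := by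
      rw [neg_mul, abs_neg, abs_of_nonneg (by positivity)]
      exact hm
    simpa [sub_neg_eq_add] using abs_exp_sub_one_sub_id_le hu
  have hgauss := abs_integral_exp_neg_mul_sq_sub_one_le hb.le m
  rw [hclosed, hcentered]
  calc _ = |(exp (-b * m ^ 2) - 1 + b * m ^ 2) / (2 * b)
          + m * ∫ x in 0..m, (exp (-b * x ^ 2) - 1)| := by
        congr 1
        field_simp
        ring
    _ ≤ |exp (-b * m ^ 2) - 1 + b * m ^ 2| / (2 * b)
          + |m| * |∫ x in 0..m, (exp (-b * x ^ 2) - 1)| := by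
        refine (abs_add_le _ _).trans_eq ?_
        rw [abs_mul m, abs_div, abs_of_pos (by positivity : 0 < 2 * b)]
    _ ≤ (b * m ^ 2) ^ 2 / (2 * b) + |m| * (b * |m| ^ 3) := by gcongr
    _ = 3 * b / 2 * m ^ 4 := by
        rw [mul_left_comm, ← pow_succ', Even.pow_abs (by decide)]
        field_simp
        ring

end Gaussian

theorem bachelierPsi_eq (a x : ℝ) :
    bachelierPsi a x = (2 * π * a)⁻¹ * exp (-(4 * π * a ^ 2)⁻¹ * x ^ 2) := by
  rw [bachelierPsi]
  ring_nf

theorem bachelierCall_eq (a m : ℝ) :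
    bachelierCall a m
      = (2 * π * a)⁻¹ * ∫ x in Ioi m, (x - m) * exp (-(4 * π * a ^ 2)⁻¹ * x ^ 2) := by
  simp_rw [bachelierCall, bachelierPsi_eq, mul_left_comm (_ - m), integral_const_mul]

/-- Rule of Thumb 1: the quadratic approximation `Ĉ(m) = a − m/2 + m²/(4πa)` of the
Bachelier call price satisfies `C(m) − Ĉ(m) = O(m⁴)` as `m → 0`. -/
theorem bachelier_quadratic_approx (a : ℝ) (ha : 0 < a) :
    ∃ δ > (0 : ℝ), ∃ M : ℝ, 0 ≤ M ∧ ∀ m : ℝ, |m| ≤ δ →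
      |bachelierCall a m - (a - m / 2 + m ^ 2 / (4 * Real.pi * a))| ≤ M * m ^ 4 := by
  set b := (4 * π * a ^ 2)⁻¹ with hb_def
  have hb : 0 < b := by positivity
  have hsqrt : √(π / b) = 2 * π * a := by
    rw [hb_def, div_inv_eq_mul, show π * (4 * π * a ^ 2) = (2 * π * a) ^ 2 by ring]
    exact sqrt_sq (by positivity)
  refine ⟨a, ha, (2 * π * a)⁻¹ * (3 * b / 2), by positivity, fun m hm => ?_⟩
  have hbm : b * m ^ 2 ≤ 1 := calc
    b * m ^ 2 ≤ b * a ^ 2 :=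
      mul_le_mul_of_nonneg_left (sq_le_sq.2 (hm.trans (le_abs_self a))) hb.le
    _ = (4 * π)⁻¹ := by rw [hb_def]; field_simp
    _ ≤ 1 := inv_le_one_of_one_le₀ (by linarith [pi_gt_three])
  have hquad : (2 * π * a)⁻¹ * (1 / (2 * b) - m * √(π / b) / 2 + m ^ 2 / 2)
      = a - m / 2 + m ^ 2 / (4 * π * a) := by
    rw [hsqrt, hb_def]
    field_simp
    ring
  rw [bachelierCall_eq, ← hquad, ← mul_sub, abs_mul, abs_of_pos (by positivity),
    mul_assoc _ (3 * b / 2)]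
  exact mul_le_mul_of_nonneg_left (abs_integral_Ioi_sub_mul_exp_neg_mul_sq_sub_le hb hbm)
    (by positivity)
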